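/- Let a : ℝ² → ℝ² be the map a(ξ) = (1 + ‖ξ‖²)^{-1/2} ξ, where ℝ² carries its standard inner product, and let R ≥ 0. Then a is strongly monotone on the closed ball of radius R with constant (1 + R²)^{-3/2}: for all ξ, ξ' ∈ ℝ² with ‖ξ‖ ≤ R and ‖ξ'‖ ≤ R, ⟪a(ξ') − a(ξ), ξ' − ξ⟫ ≥ (1 + R²)^{-3/2} ‖ξ' − ξ‖². -/
import Mathlib


open scoped RealInnerProductSpace

lemma key_ineq (s t T p w : ℝ) (hs : 1 ≤ s) (ht : 1 ≤ t) (hsT : s ≤ T) (htT : t ≤ T)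
    (hw : 0 ≤ w) (hw2 : w ^ 2 = (s ^ 2 - 1) * (t ^ 2 - 1)) (hp1 : p ≤ w) (hp2 : -w ≤ p) :
    s * t * (s ^ 2 + t ^ 2 - 2 - 2 * p) ≤ T ^ 3 * (s + t) * (s * t - 1 - p) := by
  have hT : 1 ≤ T := le_trans hs hsT
  have hst0 : (0:ℝ) < s * t := by nlinarith
  have h0 : 0 ≤ s * t - 1 := by nlinarith
  have h1 : w ^ 2 ≤ (s * t - 1) ^ 2 := by nlinarith [sq_nonneg (s - t)]
  have hw3 : w ≤ s * t - 1 := by nlinarith [sq_nonneg (w + (s * t - 1))]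
  have hq : 0 ≤ s * t - 1 - p := by linarith
  have hA : (s - t) ^ 2 ≤ (s * t - 1 - p) * (s * t - 1 + w) := by nlinarith
  have hB1 : s * t * (s * t + 1 + w) ≤ 2 * (s * t) * (s * t) := by nlinarith
  have hstT : s * t ≤ T ^ 2 := by nlinarith
  have hB2 : 2 * (s * t) * (s * t) ≤ 2 * (s * t) * T ^ 2 :=
    mul_le_mul_of_nonneg_left hstT (by positivity)
  have hB3 : T ^ 2 * (2 * (s * t)) ≤ T ^ 2 * (T * (s + t)) := by
    have h6 : 2 * (s * t) ≤ T * (s + t) := by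
      nlinarith [mul_nonneg (by linarith : (0:ℝ) ≤ s) (by linarith : (0:ℝ) ≤ T - t),
        mul_nonneg (by linarith : (0:ℝ) ≤ t) (by linarith : (0:ℝ) ≤ T - s)]
    nlinarith [sq_nonneg T]
  have hB : s * t * (s * t - 1 + w) ≤ T ^ 3 * (s + t) - 2 * (s * t) := by nlinarith
  nlinarith [mul_le_mul_of_nonneg_left hB hq, mul_le_mul_of_nonneg_left hA (le_of_lt hst0)]

lemma rpow_neg_half_eq (x : ℝ) (hx : 0 ≤ x) :
    x ^ (-(1 / 2 : ℝ)) = (Real.sqrt x)⁻¹ := by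
  rw [Real.rpow_neg hx, Real.sqrt_eq_rpow]

lemma rpow_neg_three_half_eq (x : ℝ) (hx : 0 ≤ x) :
    x ^ (-(3 / 2 : ℝ)) = ((Real.sqrt x) ^ 3)⁻¹ := by
  rw [Real.rpow_neg hx, Real.sqrt_eq_rpow, ← Real.rpow_natCast (x ^ (1/2:ℝ)) 3,
    ← Real.rpow_mul hx]
  norm_num

/-- The mean curvature flow diffusion coefficient (2.10) is strongly monotone on
the closed ball of radius R with constant (1 + R²)^{-3/2}. -/
theorem mean_curvature_coefficient_strongly_monotone_on_ball
    (a : EuclideanSpace ℝ (Fin 2) → EuclideanSpace ℝ (Fin 2))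
    (ha : ∀ ξ, a ξ = ((1 + ‖ξ‖ ^ 2) ^ (-(1 / 2 : ℝ))) • ξ)
    (R : ℝ) (hR : 0 ≤ R) :
    ∀ ξ ξ' : EuclideanSpace ℝ (Fin 2), ‖ξ‖ ≤ R → ‖ξ'‖ ≤ R →
      ⟪a ξ' - a ξ, ξ' - ξ⟫ ≥ ((1 + R ^ 2) ^ (-(3 / 2 : ℝ))) * ‖ξ' - ξ‖ ^ 2 := by
  intro ξ ξ' hξ hξ'
  set s : ℝ := Real.sqrt (1 + ‖ξ‖ ^ 2) with hs_def
  set t : ℝ := Real.sqrt (1 + ‖ξ'‖ ^ 2) with ht_def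
  set T : ℝ := Real.sqrt (1 + R ^ 2) with hT_def
  set p : ℝ := ⟪ξ, ξ'⟫ with hp_def
  have hs2 : s ^ 2 = 1 + ‖ξ‖ ^ 2 := Real.sq_sqrt (by positivity)
  have ht2 : t ^ 2 = 1 + ‖ξ'‖ ^ 2 := Real.sq_sqrt (by positivity)
  have hT2 : T ^ 2 = 1 + R ^ 2 := Real.sq_sqrt (by positivity)
  have hs1 : 1 ≤ s := by
    rw [show (1:ℝ) = Real.sqrt 1 by simp [Real.sqrt_one]]
    exact Real.sqrt_le_sqrt (by nlinarith [sq_nonneg ‖ξ‖])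
  have ht1 : 1 ≤ t := by
    rw [show (1:ℝ) = Real.sqrt 1 by simp [Real.sqrt_one]]
    exact Real.sqrt_le_sqrt (by nlinarith [sq_nonneg ‖ξ'‖])
  have hsT : s ≤ T := Real.sqrt_le_sqrt (by nlinarith [norm_nonneg ξ])
  have htT : t ≤ T := Real.sqrt_le_sqrt (by nlinarith [norm_nonneg ξ'])
  have hw : (0:ℝ) ≤ ‖ξ‖ * ‖ξ'‖ := by positivity
  have hw2 : (‖ξ‖ * ‖ξ'‖) ^ 2 = (s ^ 2 - 1) * (t ^ 2 - 1) := by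
    rw [hs2, ht2]; ring
  have hp_abs : |p| ≤ ‖ξ‖ * ‖ξ'‖ := abs_real_inner_le_norm ξ ξ'
  have hp1 : p ≤ ‖ξ‖ * ‖ξ'‖ := (abs_le.mp hp_abs).2
  have hp2 : -(‖ξ‖ * ‖ξ'‖) ≤ p := (abs_le.mp hp_abs).1
  have key := key_ineq s t T p (‖ξ‖ * ‖ξ'‖) hs1 ht1 hsT htT hw hw2 hp1 hp2
  -- rewrite coefficients as inverses of sqrt
  have hcs : (1 + ‖ξ‖ ^ 2) ^ (-(1 / 2 : ℝ)) = s⁻¹ := rpow_neg_half_eq _ (by positivity)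
  have hct : (1 + ‖ξ'‖ ^ 2) ^ (-(1 / 2 : ℝ)) = t⁻¹ := rpow_neg_half_eq _ (by positivity)
  have hK : (1 + R ^ 2) ^ (-(3 / 2 : ℝ)) = (T ^ 3)⁻¹ := rpow_neg_three_half_eq _ (by positivity)
  rw [ha, ha, hcs, hct, hK]
  -- expand inner product and norm
  have hinner : ⟪t⁻¹ • ξ' - s⁻¹ • ξ, ξ' - ξ⟫ =
      t⁻¹ * ‖ξ'‖ ^ 2 + s⁻¹ * ‖ξ‖ ^ 2 - (s⁻¹ + t⁻¹) * p := by
    simp only [inner_sub_left, inner_sub_right, real_inner_smul_left,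
      real_inner_self_eq_norm_sq, hp_def]
    rw [real_inner_comm ξ' ξ]
    ring
  have hnorm : ‖ξ' - ξ‖ ^ 2 = ‖ξ'‖ ^ 2 - 2 * p + ‖ξ‖ ^ 2 := by
    rw [norm_sub_sq_real, hp_def, real_inner_comm ξ' ξ]
  rw [hinner, hnorm, ge_iff_le]
  -- reduce to the key polynomial inequality
  have hs0 : (0:ℝ) < s := by linarith
  have ht0 : (0:ℝ) < t := by linarith
  have hT0 : (0:ℝ) < T := lt_of_lt_of_le hs0 hsT
  have hu : ‖ξ‖ ^ 2 = s ^ 2 - 1 := by linarith [hs2]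
  have hv : ‖ξ'‖ ^ 2 = t ^ 2 - 1 := by linarith [ht2]
  rw [hu, hv]
  rw [inv_mul_le_iff₀ (by positivity : (0:ℝ) < T ^ 3)]
  have hrhs : T ^ 3 * (t⁻¹ * (t ^ 2 - 1) + s⁻¹ * (s ^ 2 - 1) - (s⁻¹ + t⁻¹) * p)
      = (T ^ 3 * (s + t) * (s * t - 1 - p)) / (s * t) := by
    field_simp
    ring
  rw [hrhs, le_div_iff₀ (by positivity : (0:ℝ) < s * t)]
  have hring : (t ^ 2 - 1 - 2 * p + (s ^ 2 - 1)) * (s * t)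
      = s * t * (s ^ 2 + t ^ 2 - 2 - 2 * p) := by ring
  linarith [key]
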